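/- Let Γ be a 3-SAT formula and p the designated literal of its Γ-transformation R_Γ. Then Γ is satisfiable if and only if p is >-R_Γ-refutable, i.e., there exists a superiority relation >' such that the theory (∅, R_Γ, >') proves −∂ p. -/

import Mathlib

namespace DL

abbrev Atom := ℕ

/-- A literal: an atom with a polarity. -/
structure Lit where
  atom : Atom
  pos : Bool
deriving DecidableEq

/-- The complement `∼p` of a literal. -/
def Lit.neg (l : Lit) : Lit := ⟨l.atom, !l.pos⟩

/-- A defeasible rule: a finite set of antecedent literals and a head literal. -/
structure Rule where
  ante : Finset Lit
  head : Lit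
deriving DecidableEq

/-- A defeasible theory: facts, defeasible rules, and a superiority relation. -/
structure DTheory where
  facts : Finset Lit
  rules : Finset Rule
  sup : Rule → Rule → Prop

/-- A superiority relation is acyclic iff its transitive closure is irreflexive. -/
def Acyclic (sup : Rule → Rule → Prop) : Prop :=
  Irreflexive (Relation.TransGen sup)

def DTheory.FactsConsistent (D : DTheory) : Prop :=
  ∀ l ∈ D.facts, l.neg ∉ D.facts

/-- Well-formedness of a defeasible theory: consistent facts, acyclic superiority
relation defined on the rules of the theory. -/
def DTheory.WellFormed (D : DTheory) : Prop :=
  D.FactsConsistent ∧ Acyclic D.sup ∧ ∀ r s, D.sup r s → r ∈ D.rules ∧ s ∈ D.rules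

/-- Proof tags: Δ, Σ, σ, ω, φ, ∂. -/
inductive Tag | delta | Sig | sgm | omg | phi | prt
deriving DecidableEq

/-- A tagged literal: a tag, a sign (`true` = `+`, `false` = `−`), and a literal. -/
abbrev TLit := Tag × Bool × Lit

/-- The proof conditions of Defeasible Logic (defeasible rules only), relative to
the preceding part `P` of a proof sequence. -/
def Cond (D : DTheory) (P : List TLit) : Tag → Bool → Lit → Prop
  | .delta, true, q => q ∈ D.facts
  | .delta, false, q => q ∉ D.facts
  | .Sig, true, q =>
      (Tag.delta, true, q) ∈ P ∨
      ∃ r ∈ D.rules, r.head = q ∧ ∀ a ∈ r.ante, (Tag.Sig, true, a) ∈ P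
  | .Sig, false, q =>
      (Tag.delta, true, q) ∉ P ∧
      ∀ r ∈ D.rules, r.head = q → ∃ a ∈ r.ante, (Tag.Sig, false, a) ∈ P
  | .sgm, true, q =>
      (Tag.delta, true, q) ∈ P ∨
      ∃ r ∈ D.rules, r.head = q ∧ (∀ a ∈ r.ante, (Tag.sgm, true, a) ∈ P) ∧
        ∀ s ∈ D.rules, s.head = q.neg →
          (∃ a ∈ s.ante, (Tag.prt, false, a) ∈ P) ∨ ¬ D.sup s r
  | .sgm, false, q =>
      (Tag.delta, true, q) ∉ P ∧
      ∀ r ∈ D.rules, r.head = q →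
        (∃ a ∈ r.ante, (Tag.sgm, false, a) ∈ P) ∨
        ∃ s ∈ D.rules, s.head = q.neg ∧ (∀ a ∈ s.ante, (Tag.prt, true, a) ∈ P) ∧ D.sup s r
  | .omg, true, q =>
      (Tag.delta, true, q) ∈ P ∨
      ∃ r ∈ D.rules, r.head = q ∧ ∀ a ∈ r.ante, (Tag.prt, true, a) ∈ P
  | .omg, false, q =>
      (Tag.delta, true, q) ∉ P ∧
      ∀ r ∈ D.rules, r.head = q → ∃ a ∈ r.ante, (Tag.prt, false, a) ∈ P
  | .phi, true, q =>
      (Tag.delta, true, q) ∈ P ∨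
      ∃ r ∈ D.rules, r.head = q ∧ (∀ a ∈ r.ante, (Tag.phi, true, a) ∈ P) ∧
        ∀ s ∈ D.rules, s.head = q.neg → ∃ a ∈ s.ante, (Tag.Sig, false, a) ∈ P
  | .phi, false, q =>
      (Tag.delta, true, q) ∉ P ∧
      ∀ r ∈ D.rules, r.head = q →
        (∃ a ∈ r.ante, (Tag.phi, false, a) ∈ P) ∨
        ∃ s ∈ D.rules, s.head = q.neg ∧ ∀ a ∈ s.ante, (Tag.Sig, true, a) ∈ P
  | .prt, true, q =>
      (Tag.delta, true, q) ∈ P ∨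
      ((Tag.delta, false, q.neg) ∈ P ∧
       (∃ r ∈ D.rules, r.head = q ∧ ∀ a ∈ r.ante, (Tag.prt, true, a) ∈ P) ∧
       ∀ s ∈ D.rules, s.head = q.neg →
         (∃ a ∈ s.ante, (Tag.prt, false, a) ∈ P) ∨
         ∃ t ∈ D.rules, t.head = q ∧ (∀ a ∈ t.ante, (Tag.prt, true, a) ∈ P) ∧ D.sup t s)
  | .prt, false, q =>
      (Tag.delta, true, q) ∉ P ∧
      ((Tag.delta, true, q.neg) ∈ P ∨
       (∀ r ∈ D.rules, r.head = q → ∃ a ∈ r.ante, (Tag.prt, false, a) ∈ P) ∨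
       ∃ s ∈ D.rules, s.head = q.neg ∧ (∀ a ∈ s.ante, (Tag.prt, true, a) ∈ P) ∧
         ∀ t ∈ D.rules, t.head = q →
           (∃ a ∈ t.ante, (Tag.prt, false, a) ∈ P) ∨ ¬ D.sup t s)

/-- A proof (derivation) is a finite sequence of tagged literals each of which
satisfies the proof condition relative to the preceding part of the sequence. -/
inductive ValidProof (D : DTheory) : List TLit → Prop
  | nil : ValidProof D []
  | snoc {P : List TLit} {t : Tag} {s : Bool} {q : Lit} :
      ValidProof D P → Cond D P t s q → ValidProof D (P ++ [(t, s, q)])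

/-- `D ⊢ ±# q`: some valid proof in `D` contains the tagged literal. -/
def Proves (D : DTheory) (t : Tag) (s : Bool) (q : Lit) : Prop :=
  ∃ P, ValidProof D P ∧ (t, s, q) ∈ P

/-- A theory is consistent iff it never defeasibly proves both a literal and
its complement. -/
def Consistent (D : DTheory) : Prop :=
  ∀ p : Lit, ¬ (Proves D .prt true p ∧ Proves D .prt true p.neg)

/-- `a` depends on `b` iff `b = a`, or for every rule for `a` either `b` is an
antecedent or some antecedent depends on `b` (least such relation,
impredicatively encoded). -/
def DependsOn (D : DTheory) (a b : Lit) : Prop :=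
  ∀ S : Lit → Lit → Prop,
    (∀ x, S x x) →
    (∀ x y, (∀ r ∈ D.rules, r.head = x → y ∈ r.ante ∨ ∃ c ∈ r.ante, S c y) → S x y) →
    S a b

/-- `p` is ∂-unreachable iff every rule for `p` either has two antecedents
depending on complementary literals or has a ∂-unreachable antecedent
(least such predicate, impredicatively encoded). -/
def Unreachable (D : DTheory) (p : Lit) : Prop :=
  ∀ S : Lit → Prop,
    (∀ x, (∀ r ∈ D.rules, r.head = x →
        (∃ l : Lit, ∃ a ∈ r.ante, ∃ b ∈ r.ante, DependsOn D a l ∧ DependsOn D b l.neg) ∨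
        ∃ d ∈ r.ante, S d) → S x) →
    S p

/-- The literal `p` appears in the theory `D` (its atom occurs in `D`). -/
def AppearsIn (p : Lit) (D : DTheory) : Prop :=
  (∃ l ∈ D.facts, l.atom = p.atom) ∨
  ∃ r ∈ D.rules, r.head.atom = p.atom ∨ ∃ l ∈ r.ante, l.atom = p.atom

/-- Positive part of the belief set of a defeasible theory. -/
def BSplus (D : DTheory) : Set Lit := {p | AppearsIn p D ∧ Proves D .prt true p}

/-- Negative part of the belief set of a defeasible theory. -/
def BSminus (D : DTheory) : Set Lit := {p | AppearsIn p D ∧ Proves D .prt false p}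

/-- The belief set of a defeasible theory. -/
def BS (D : DTheory) : Set Lit := BSplus D ∪ BSminus D

/-- Edge of the atom dependency graph: from atom `a` to atom `b` whenever some
rule has head with atom `b` and an antecedent literal with atom `a`. -/
def AtomEdge (D : DTheory) (a b : Atom) : Prop :=
  ∃ r ∈ D.rules, r.head.atom = b ∧ ∃ l ∈ r.ante, l.atom = a

/-- A theory is decisive iff every literal appearing in it is defeasibly
provable or defeasibly refuted. -/
def Decisive (D : DTheory) : Prop :=
  ∀ p : Lit, AppearsIn p D → Proves D .prt true p ∨ Proves D .prt false p

end DL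


namespace DL

/-- The rule set `R_Γ` of the Γ-transformation of a 3-SAT formula
`Γ = ∧ᵢ (aᵢ¹ ∨ aᵢ² ∨ aᵢ³)`, with fresh atoms `c i` and `p`. -/
def gammaRules (n : ℕ) (Γ : Fin n → Fin 3 → Lit) (c : Fin n → Atom) (p : Atom) :
    Finset Rule :=
  (Finset.univ.image fun ij : Fin n × Fin 3 => (⟨∅, Γ ij.1 ij.2⟩ : Rule)) ∪
  (Finset.univ.image fun ij : Fin n × Fin 3 =>
    (⟨{Γ ij.1 ij.2}, ⟨c ij.1, true⟩⟩ : Rule)) ∪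
  (Finset.univ.image fun i : Fin n => (⟨∅, ⟨c i, false⟩⟩ : Rule)) ∪
  (Finset.univ.image fun i : Fin n => (⟨{⟨c i, false⟩}, ⟨p, true⟩⟩ : Rule))

/-- Freshness of the atoms `c i` and `p` with respect to Γ. -/
def GammaFresh (n : ℕ) (Γ : Fin n → Fin 3 → Lit) (c : Fin n → Atom) (p : Atom) : Prop :=
  Function.Injective c ∧ (∀ i, c i ≠ p) ∧
  ∀ i j, (Γ i j).atom ≠ p ∧ ∀ k, (Γ i j).atom ≠ c k

/-- Satisfiability of the 3-SAT formula Γ. -/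
def GammaSat (n : ℕ) (Γ : Fin n → Fin 3 → Lit) : Prop :=
  ∃ I : Atom → Bool, ∀ i : Fin n, ∃ j : Fin 3, I (Γ i j).atom = (Γ i j).pos

end DL

/-!
Given a satisfying interpretation `I`, let each unconditional rule whose head `I` makes true
beat the unconditional rule for the complementary literal. For every clause, its true literal
`q` is then proved (`+∂ q`), so the rule `q ⇒ c i` refutes `∼c i`; with every `∼c i` refuted,
no rule for `p` applies and `p` is refuted.

Conversely, `−∂ p` forces `−∂ ∼c i` for every clause, and since `⇒ ∼c i` has no antecedent to
refute, some rule `q ⇒ c i` must have `+∂ q`. The literals of Γ are derivable only by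
unconditional rules, so `+∂ q` and `+∂ ∼q` together would need each of `⇒ q` and `⇒ ∼q` to
beat the other, which acyclicity forbids; hence the proved literals are consistent and
define a satisfying interpretation.
-/

namespace DL

@[simp] lemma Lit.neg_neg (l : Lit) : l.neg.neg = l := by simp [Lit.neg]

lemma Lit.neg_ne_self (l : Lit) : l.neg ≠ l := fun h => by
  simpa [Lit.neg] using congrArg Lit.pos h

@[simp] lemma Lit.atom_neg (l : Lit) : l.neg.atom = l.atom := rfl

lemma exists_interp_of_consistent (S : Lit → Prop) (hS : ∀ q, S q → ¬ S q.neg) :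
    ∃ I : Atom → Bool, ∀ q, S q → I q.atom = q.pos := by
  classical
  refine ⟨fun a => decide (S ⟨a, true⟩), fun ⟨a, pos⟩ hq => ?_⟩
  cases pos
  · simpa [Lit.neg] using hS _ hq
  · simpa using hq

def OnlyFactRules (R : Finset Rule) (a : Atom) : Prop :=
  ∀ r ∈ R, r.head.atom = a → r.ante = ∅

lemma OnlyFactRules.eq {R : Finset Rule} {a : Atom} (h : OnlyFactRules R a) {r : Rule}
    (hr : r ∈ R) (ha : r.head.atom = a) : r = ⟨∅, r.head⟩ := by
  obtain ⟨ante, head⟩ := r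
  simpa using h _ hr ha

section ProofSequences

variable {D : DTheory} {P : List TLit}

lemma ValidProof.exists_prefix_cond (hP : ValidProof D P) {t : Tag} {s : Bool} {q : Lit}
    (h : (t, s, q) ∈ P) : ∃ P', P' <+: P ∧ Cond D P' t s q := by
  induction hP with
  | nil => simp at h
  | @snoc P t' s' q' _ hC ih =>
    rcases List.mem_append.1 h with h | h
    · obtain ⟨P', hpre, hcond⟩ := ih h
      exact ⟨P', hpre.trans (List.prefix_append _ _), hcond⟩
    · obtain ⟨rfl, rfl, rfl⟩ : t = t' ∧ s = s' ∧ q = q' := by simpa using h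
      exact ⟨P, List.prefix_append _ _, hC⟩

lemma ValidProof.delta_notMem (hF : D.facts = ∅) (hP : ValidProof D P) (q : Lit) :
    (Tag.delta, true, q) ∉ P := fun h => by
  obtain ⟨_, -, hq⟩ := hP.exists_prefix_cond h
  simp [Cond, hF] at hq

lemma ValidProof.prt_true_cases (hF : D.facts = ∅) (hP : ValidProof D P) {q : Lit}
    (h : (Tag.prt, true, q) ∈ P) :
    (∃ r ∈ D.rules, r.head = q ∧ ∀ a ∈ r.ante, (Tag.prt, true, a) ∈ P) ∧
      ∀ s ∈ D.rules, s.head = q.neg →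
        (∃ a ∈ s.ante, (Tag.prt, false, a) ∈ P) ∨
          ∃ t ∈ D.rules, t.head = q ∧ D.sup t s := by
  obtain ⟨P', hpre, hδ | ⟨-, ⟨r, hr, hrq, hante⟩, hatt⟩⟩ := hP.exists_prefix_cond h
  · exact absurd (hpre.subset hδ) (hP.delta_notMem hF q)
  refine ⟨⟨r, hr, hrq, fun a ha => hpre.subset (hante a ha)⟩, fun s hs hsq => ?_⟩
  obtain ⟨a, ha, hrefuted⟩ | ⟨t, ht, htq, -, hts⟩ := hatt s hs hsq
  · exact Or.inl ⟨a, ha, hpre.subset hrefuted⟩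
  · exact Or.inr ⟨t, ht, htq, hts⟩

lemma ValidProof.prt_false_cases (hF : D.facts = ∅) (hP : ValidProof D P) {q : Lit}
    (h : (Tag.prt, false, q) ∈ P) :
    (∀ r ∈ D.rules, r.head = q → ∃ a ∈ r.ante, (Tag.prt, false, a) ∈ P) ∨
      ∃ s ∈ D.rules, s.head = q.neg ∧ ∀ a ∈ s.ante, (Tag.prt, true, a) ∈ P := by
  obtain ⟨P', hpre, -, hδ | hall | ⟨s, hs, hsq, hante, -⟩⟩ := hP.exists_prefix_cond h
  · exact absurd (hpre.subset hδ) (hP.delta_notMem hF q.neg)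
  · refine Or.inl fun r hr hrq => ?_
    obtain ⟨a, ha, hrefuted⟩ := hall r hr hrq
    exact ⟨a, ha, hpre.subset hrefuted⟩
  · exact Or.inr ⟨s, hs, hsq, fun a ha => hpre.subset (hante a ha)⟩

lemma ValidProof.not_prt_true_and_neg (hF : D.facts = ∅) (hA : Acyclic D.sup)
    (hP : ValidProof D P) {q : Lit} (hq : OnlyFactRules D.rules q.atom)
    (hpos : (Tag.prt, true, q) ∈ P) (hneg : (Tag.prt, true, q.neg) ∈ P) : False := by
  obtain ⟨-, hatt⟩ := hP.prt_true_cases hF hpos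
  obtain ⟨⟨r, hr, hrq, -⟩, hatt'⟩ := hP.prt_true_cases hF hneg
  have hr_eq := hq.eq hr (by simp [hrq])
  obtain ⟨a, ha, -⟩ | ⟨t, ht, htq, htr⟩ := hatt r hr hrq
  · simp [hq r hr (by simp [hrq])] at ha
  obtain ⟨a, ha, -⟩ | ⟨t', ht', ht'q, ht't⟩ := hatt' t ht (by simp [htq])
  · simp [hq t ht (by simp [htq])] at ha
  obtain rfl : t' = r := by rw [hq.eq ht' (by simp [ht'q]), hr_eq, ht'q, hrq]
  exact hA _ (.tail (.single ht't) htr)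

lemma ValidProof.snoc_prt_false_of_forall (hF : D.facts = ∅) (hP : ValidProof D P) {q : Lit}
    (h : ∀ r ∈ D.rules, r.head = q → ∃ a ∈ r.ante, (Tag.prt, false, a) ∈ P) :
    ValidProof D (P ++ [(Tag.prt, false, q)]) :=
  hP.snoc ⟨hP.delta_notMem hF q, Or.inr (Or.inl h)⟩

end ProofSequences

def factSup (R : Finset Rule) (I : Atom → Bool) (r s : Rule) : Prop :=
  r ∈ R ∧ s ∈ R ∧ s.ante = ∅ ∧ s.head = r.head.neg ∧ I r.head.atom = r.head.pos

section FactSup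

variable {R : Finset Rule} {I : Atom → Bool}

lemma not_factSup_of_factSup {r s t : Rule} (hrs : factSup R I r s) : ¬ factSup R I s t := by
  rintro ⟨-, -, -, -, hs⟩
  obtain ⟨-, -, -, hsr, hr⟩ := hrs
  rw [hsr, Lit.atom_neg, hr] at hs
  simp [Lit.neg] at hs

lemma wellFormed_factSup : (⟨∅, R, factSup R I⟩ : DTheory).WellFormed := by
  refine ⟨by simp [DTheory.FactsConsistent], fun r hr => ?_, fun r s h => ⟨h.1, h.2.1⟩⟩
  have : IsTrans Rule (factSup R I) :=
    ⟨fun _ _ _ hab hbc => (not_factSup_of_factSup hab hbc).elim⟩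
  rw [Relation.transGen_eq_self] at hr
  exact Lit.neg_ne_self _ hr.2.2.2.1.symm

variable {P : List TLit}

lemma ValidProof.append_prt_true_of_fact (hP : ValidProof ⟨∅, R, factSup R I⟩ P) {q : Lit}
    (hqR : ⟨∅, q⟩ ∈ R) (hI : I q.atom = q.pos) (hq : OnlyFactRules R q.atom) :
    ValidProof ⟨∅, R, factSup R I⟩
      (P ++ [(Tag.delta, false, q.neg)] ++ [(Tag.prt, true, q)]) := by
  refine (hP.snoc (by simp [Cond])).snoc (Or.inr ⟨by simp, ⟨_, hqR, rfl, by simp⟩, ?_⟩)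
  intro s hs hsq
  exact Or.inr ⟨_, hqR, rfl, by simp, hqR, hs, hq s hs (by simp [hsq]), hsq, hI⟩

lemma ValidProof.snoc_prt_false_of_conditional (hP : ValidProof ⟨∅, R, factSup R I⟩ P)
    {q : Lit} {s : Rule} (hs : s ∈ R) (hsq : s.head = q.neg) (hne : s.ante.Nonempty)
    (hante : ∀ a ∈ s.ante, (Tag.prt, true, a) ∈ P) :
    ValidProof ⟨∅, R, factSup R I⟩ (P ++ [(Tag.prt, false, q)]) :=
  hP.snoc ⟨hP.delta_notMem rfl q, Or.inr (Or.inr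
    ⟨s, hs, hsq, hante, fun _ _ _ => Or.inr fun hts => hne.ne_empty hts.2.2.1⟩)⟩

end FactSup

section GammaTransformation

variable {n : ℕ} {Γ : Fin n → Fin 3 → Lit} {c : Fin n → Atom} {p : Atom}

lemma mem_gammaRules {r : Rule} : r ∈ gammaRules n Γ c p ↔
      (∃ i j, r = ⟨∅, Γ i j⟩) ∨ (∃ i j, r = ⟨{Γ i j}, ⟨c i, true⟩⟩) ∨
      (∃ i, r = ⟨∅, ⟨c i, false⟩⟩) ∨
      (∃ i, r = ⟨{⟨c i, false⟩}, ⟨p, true⟩⟩) := by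
  simp [gammaRules, Prod.exists, eq_comm]

lemma onlyFactRules_gammaRules (hf : GammaFresh n Γ c p) (i : Fin n) (j : Fin 3) :
    OnlyFactRules (gammaRules n Γ c p) (Γ i j).atom := by
  intro r hr h
  rcases mem_gammaRules.1 hr with ⟨l, k, rfl⟩ | ⟨l, k, rfl⟩ | ⟨l, rfl⟩ | ⟨l, rfl⟩
  · rfl
  · exact absurd h.symm ((hf.2.2 i j).2 l)
  · rfl
  · exact absurd h.symm (hf.2.2 i j).1

lemma exists_eq_of_mem_gammaRules_of_head_p (hf : GammaFresh n Γ c p) {r : Rule}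
    (hr : r ∈ gammaRules n Γ c p) (h : r.head = ⟨p, true⟩) :
    ∃ i, r = ⟨{⟨c i, false⟩}, ⟨p, true⟩⟩ := by
  rcases mem_gammaRules.1 hr with ⟨i, j, rfl⟩ | ⟨i, j, rfl⟩ | ⟨i, rfl⟩ | ⟨i, rfl⟩
  · exact absurd (congrArg Lit.atom h) (hf.2.2 i j).1
  · exact absurd (congrArg Lit.atom h) (hf.2.1 i)
  · exact absurd (congrArg Lit.atom h) (hf.2.1 i)
  · exact ⟨i, rfl⟩

lemma head_ne_neg_p_of_mem_gammaRules (hf : GammaFresh n Γ c p) {r : Rule}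
    (hr : r ∈ gammaRules n Γ c p) : r.head ≠ ⟨p, false⟩ := fun h => by
  rcases mem_gammaRules.1 hr with ⟨i, j, rfl⟩ | ⟨i, j, rfl⟩ | ⟨i, rfl⟩ | ⟨i, rfl⟩
  · exact (hf.2.2 i j).1 (congrArg Lit.atom h)
  · exact hf.2.1 i (congrArg Lit.atom h)
  · exact hf.2.1 i (congrArg Lit.atom h)
  · simp at h

lemma exists_eq_of_mem_gammaRules_of_head_c (hf : GammaFresh n Γ c p) {r : Rule}
    (hr : r ∈ gammaRules n Γ c p) {i : Fin n} (h : r.head = ⟨c i, true⟩) :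
    ∃ j, r = ⟨{Γ i j}, ⟨c i, true⟩⟩ := by
  rcases mem_gammaRules.1 hr with ⟨l, j, rfl⟩ | ⟨l, j, rfl⟩ | ⟨l, rfl⟩ | ⟨l, rfl⟩
  · exact absurd (congrArg Lit.atom h) ((hf.2.2 l j).2 i)
  · obtain rfl : l = i := hf.1 (congrArg Lit.atom h)
    exact ⟨j, rfl⟩
  · simp at h
  · exact absurd (congrArg Lit.atom h).symm (hf.2.1 i)

section Refutation

variable {sup : Rule → Rule → Prop} {P : List TLit}

lemma ValidProof.refutes_neg_c_of_refutes_p (hf : GammaFresh n Γ c p)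
    (hP : ValidProof ⟨∅, gammaRules n Γ c p, sup⟩ P)
    (h : (Tag.prt, false, ⟨p, true⟩) ∈ P) (i : Fin n) : (Tag.prt, false, ⟨c i, false⟩) ∈ P := by
  rcases hP.prt_false_cases rfl h with hall | ⟨s, hs, hsp, -⟩
  · obtain ⟨a, ha, hrefuted⟩ := hall _ (mem_gammaRules.2 (.inr (.inr (.inr ⟨i, rfl⟩)))) rfl
    rwa [Finset.mem_singleton.1 ha] at hrefuted
  · exact absurd hsp (head_ne_neg_p_of_mem_gammaRules hf hs)

lemma ValidProof.exists_prt_true_of_refutes_neg_c (hf : GammaFresh n Γ c p)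
    (hP : ValidProof ⟨∅, gammaRules n Γ c p, sup⟩ P) {i : Fin n}
    (h : (Tag.prt, false, ⟨c i, false⟩) ∈ P) : ∃ k, (Tag.prt, true, Γ i k) ∈ P := by
  rcases hP.prt_false_cases rfl h with hall | ⟨s, hs, hsc, hante⟩
  · obtain ⟨a, ha, -⟩ := hall _ (mem_gammaRules.2 (.inr (.inr (.inl ⟨i, rfl⟩)))) rfl
    simp at ha
  · obtain ⟨k, rfl⟩ := exists_eq_of_mem_gammaRules_of_head_c hf hs hsc
    exact ⟨k, hante _ (Finset.mem_singleton_self _)⟩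

end Refutation

lemma exists_validProof_refuting_clauses (hf : GammaFresh n Γ c p) {I : Atom → Bool}
    {j : Fin n → Fin 3} (hj : ∀ i, I (Γ i (j i)).atom = (Γ i (j i)).pos) (L : List (Fin n)) :
    ∃ P, ValidProof ⟨∅, gammaRules n Γ c p, factSup (gammaRules n Γ c p) I⟩ P ∧
      ∀ i ∈ L, (Tag.prt, false, ⟨c i, false⟩) ∈ P := by
  induction L with
  | nil => exact ⟨[], .nil, by simp⟩
  | cons i L ih =>
    obtain ⟨P, hP, hL⟩ := ih
    have hfact := (hP.append_prt_true_of_fact (mem_gammaRules.2 (.inl ⟨i, j i, rfl⟩)) (hj i)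
      (onlyFactRules_gammaRules hf i (j i)))
    refine ⟨_, hfact.snoc_prt_false_of_conditional (q := ⟨c i, false⟩)
      (mem_gammaRules.2 (.inr (.inl ⟨i, j i, rfl⟩))) rfl (Finset.singleton_nonempty _)
      (by simp), ?_⟩
    rintro i' (_ | ⟨_, hi'⟩)
    · simp
    · simp [hL i' hi']

end GammaTransformation

end DL

open DL in
/-- Γ is satisfiable iff the designated literal `p` of its Γ-transformation is
`>`-`R_Γ`-refutable. -/
theorem stmt7 (n : ℕ) (Γ : Fin n → Fin 3 → Lit) (c : Fin n → Atom) (p : Atom)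
    (hf : GammaFresh n Γ c p) :
    GammaSat n Γ ↔
      ∃ sup : Rule → Rule → Prop,
        (⟨∅, gammaRules n Γ c p, sup⟩ : DTheory).WellFormed ∧
        Proves ⟨∅, gammaRules n Γ c p, sup⟩ .prt false ⟨p, true⟩ := by
  constructor
  · rintro ⟨I, hI⟩
    choose j hj using hI
    obtain ⟨P, hP, hrefuted⟩ := exists_validProof_refuting_clauses hf hj (List.finRange n)
    refine ⟨_, wellFormed_factSup, P ++ [(Tag.prt, false, ⟨p, true⟩)],
      hP.snoc_prt_false_of_forall rfl fun r hr hrp => ?_, by simp⟩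
    obtain ⟨i, rfl⟩ := exists_eq_of_mem_gammaRules_of_head_p hf hr hrp
    exact ⟨_, Finset.mem_singleton_self _, hrefuted i (List.mem_finRange i)⟩
  · rintro ⟨sup, ⟨-, hA, -⟩, P, hP, hp⟩
    obtain ⟨I, hI⟩ := exists_interp_of_consistent
      (fun q => (Tag.prt, true, q) ∈ P ∧ OnlyFactRules (gammaRules n Γ c p) q.atom)
      fun q ⟨hq, hfact⟩ ⟨hnq, _⟩ => hP.not_prt_true_and_neg rfl hA hfact hq hnq
    refine ⟨I, fun i => ?_⟩
    obtain ⟨k, hk⟩ :=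
      hP.exists_prt_true_of_refutes_neg_c hf (hP.refutes_neg_c_of_refutes_p hf hp i)
    exact ⟨k, hI _ ⟨hk, onlyFactRules_gammaRules hf i k⟩⟩
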